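/- arXiv:1409.0488 — 2 statements merged into one kernel-verified Lean document; each statement's English description precedes it below -/
import Mathlib

section
/- For all n ≥ 1, the variance satisfies the exact formula σ_n² = (2^{2n+5}·(4+3n) − 2·(8+3n) − 2^{n+2}·(−1)^n·(28+36n+9n²)) / (81·(2^{n+2} − (−1)^n)²). -/
open scoped Classical

/-- A finite set `S` of positive integers is Kentucky-2 legal if for all distinct
`i, j ∈ S` we have `|⌈i/2⌉ - ⌈j/2⌉| ≥ 2`. -/
def KLegal (S : Finset ℕ) : Prop :=
  (∀ i ∈ S, 1 ≤ i) ∧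
  ∀ i ∈ S, ∀ j ∈ S, i ≠ j → 2 ≤ |(((i + 1) / 2 : ℕ) : ℤ) - (((j + 1) / 2 : ℕ) : ℤ)|

/-- `p n k` is the number of Kentucky-2 legal subsets of `{1,…,2n}` of cardinality `k`. -/
noncomputable def p (n k : ℕ) : ℕ :=
  ((Finset.Icc 1 (2 * n)).powerset.filter (fun S => KLegal S ∧ S.card = k)).card

/-- `μ n = (Σ_{k≥0} k * p n k) / (Σ_{k≥0} p n k)`. -/
noncomputable def mu (n : ℕ) : ℝ :=
  (∑' k : ℕ, (k : ℝ) * (p n k : ℝ)) / (∑' k : ℕ, (p n k : ℝ))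

/-- `σ² n = (Σ_{k≥0} k² * p n k) / (Σ_{k≥0} p n k) - (μ n)²`. -/
noncomputable def sigmaSq (n : ℕ) : ℝ :=
  (∑' k : ℕ, (k : ℝ) ^ 2 * (p n k : ℝ)) / (∑' k : ℕ, (p n k : ℝ)) - (mu n) ^ 2

lemma klegal_mono {S T : Finset ℕ} (h : T ⊆ S) (hS : KLegal S) : KLegal T :=
  ⟨fun i hi => hS.1 i (h hi), fun i hi j hj hij => hS.2 i (h hi) j (h hj) hij⟩

lemma klegal_empty : KLegal ∅ := ⟨by simp, by simp⟩

lemma p_zero (n : ℕ) : p n 0 = 1 := by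
  unfold p
  have : ((Finset.Icc 1 (2 * n)).powerset.filter (fun S => KLegal S ∧ S.card = 0)) = {∅} := by
    ext S
    simp only [Finset.mem_filter, Finset.mem_powerset, Finset.card_eq_zero,
      Finset.mem_singleton]
    constructor
    · rintro ⟨-, -, h⟩; exact h
    · rintro rfl; exact ⟨Finset.empty_subset _, klegal_empty, rfl⟩
  rw [this, Finset.card_singleton]

lemma p_eq_zero {n k : ℕ} (h : 2 * n < k) : p n k = 0 := by
  unfold p
  rw [Finset.card_eq_zero, Finset.filter_eq_empty_iff]
  rintro S hS ⟨-, hcard⟩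
  have := Finset.card_le_card (Finset.mem_powerset.mp hS)
  rw [Nat.card_Icc] at this
  omega



-- if S legal, x ∈ S with 2n+3 ≤ x ≤ 2n+4, then every other element j of S has j ≤ 2n (given j ≤ 2n+4, 1 ≤ j)
lemma erase_small {n x : ℕ} {S : Finset ℕ} (hx1 : 2*n+3 ≤ x) (hx2 : x ≤ 2*n+4)
    (hS : KLegal S) (hxS : x ∈ S) (hsub : S ⊆ Finset.Icc 1 (2*n+4)) :
    S.erase x ⊆ Finset.Icc 1 (2*n) := by
  intro j hj
  have hjx := Finset.ne_of_mem_erase hj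
  have hjS := Finset.mem_of_mem_erase hj
  have hjI := Finset.mem_Icc.mp (hsub hjS)
  have h2 := hS.2 j hjS x hxS hjx
  rw [le_abs] at h2
  rw [Finset.mem_Icc]
  omega

-- inserting x with 2n+3 ≤ x ≤ 2n+4 into legal T ⊆ Icc 1 (2n) stays legal
lemma klegal_insert {n x : ℕ} {T : Finset ℕ} (hx1 : 2*n+3 ≤ x) (hx2 : x ≤ 2*n+4)
    (hT : KLegal T) (hsub : T ⊆ Finset.Icc 1 (2*n)) : KLegal (insert x T) := by
  constructor
  · intro i hi
    rcases Finset.mem_insert.mp hi with rfl | hi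
    · omega
    · exact hT.1 i hi
  · intro i hi j hj hij
    have key : ∀ a ∈ T, 2 ≤ |(((x + 1) / 2 : ℕ) : ℤ) - (((a + 1) / 2 : ℕ) : ℤ)| := by
      intro a ha
      have haI := Finset.mem_Icc.mp (hsub ha)
      rw [le_abs]
      left
      omega
    rcases Finset.mem_insert.mp hi with rfl | hi'
    · rcases Finset.mem_insert.mp hj with rfl | hj'
      · exact absurd rfl hij
      · exact key j hj'
    · rcases Finset.mem_insert.mp hj with rfl | hj'
      · rw [abs_sub_comm]; exact key i hi'
      · exact hT.2 i hi' j hj' hij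

-- the count of legal (k+1)-sets in Icc 1 (2n+4) containing x (x ∈ {2n+3, 2n+4})
lemma card_contains (n k x : ℕ) (hx1 : 2*n+3 ≤ x) (hx2 : x ≤ 2*n+4) :
    (((Finset.Icc 1 (2*n+4)).powerset.filter
      (fun S => (KLegal S ∧ S.card = k+1) ∧ x ∈ S))).card = p n k := by
  rw [p]
  apply Finset.card_bij (fun S _ => S.erase x)
  · rintro S hS
    rw [Finset.mem_filter, Finset.mem_powerset] at hS
    obtain ⟨hsub, ⟨hleg, hcard⟩, hxS⟩ := hS
    rw [Finset.mem_filter, Finset.mem_powerset]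
    refine ⟨erase_small hx1 hx2 hleg hxS hsub, klegal_mono (Finset.erase_subset _ _) hleg, ?_⟩
    rw [Finset.card_erase_of_mem hxS, hcard]
    omega
  · rintro S hS T hT h
    rw [Finset.mem_filter] at hS hT
    have := congrArg (insert x) h
    rwa [Finset.insert_erase hS.2.2, Finset.insert_erase hT.2.2] at this
  · intro T hT
    rw [Finset.mem_filter, Finset.mem_powerset] at hT
    obtain ⟨hsub, hleg, hcard⟩ := hT
    have hxT : x ∉ T := by
      intro hx
      have := Finset.mem_Icc.mp (hsub hx); omega
    refine ⟨insert x T, ?_, ?_⟩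
    · rw [Finset.mem_filter, Finset.mem_powerset]
      refine ⟨?_, ⟨klegal_insert hx1 hx2 hleg hsub, ?_⟩, Finset.mem_insert_self _ _⟩
      · intro a ha
        rcases Finset.mem_insert.mp ha with rfl | ha
        · rw [Finset.mem_Icc]; omega
        · have := Finset.mem_Icc.mp (hsub ha); rw [Finset.mem_Icc]; omega
      · rw [Finset.card_insert_of_notMem hxT, hcard]
    · rw [Finset.erase_insert hxT]

set_option maxHeartbeats 1000000 in
lemma p_rec (n k : ℕ) : p (n+2) (k+1) = p (n+1) (k+1) + 2 * p n k := by
  have h24 : 2 * (n+2) = 2*n+4 := by ring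
  have h22 : 2 * (n+1) = 2*n+2 := by ring
  rw [p, h24]
  set P : Finset ℕ → Prop := fun S => KLegal S ∧ S.card = k+1 with hP
  set X := (Finset.Icc 1 (2*n+4)).powerset.filter P with hX
  -- no set contains both 2n+3 and 2n+4
  have hnotboth : ∀ S ∈ X, (2*n+4) ∈ S → (2*n+3) ∉ S := by
    intro S hS h4 h3
    rw [hX, Finset.mem_filter] at hS
    have := hS.2.1.2 (2*n+3) h3 (2*n+4) h4 (by omega)
    rw [le_abs] at this
    omega
  have split1 := Finset.card_filter_add_card_filter_not
    (s := X) (p := fun S => (2*n+3) ∈ S)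
  have split2 := Finset.card_filter_add_card_filter_not
    (s := X.filter (fun S => ¬ (2*n+3) ∈ S)) (p := fun S => (2*n+4) ∈ S)
  -- X1
  have hX1 : (X.filter (fun S => (2*n+3) ∈ S)).card = p n k := by
    rw [hX, Finset.filter_filter]
    exact card_contains n k (2*n+3) (by omega) (by omega)
  -- X2
  have hX2 : ((X.filter (fun S => ¬ (2*n+3) ∈ S)).filter (fun S => (2*n+4) ∈ S)).card
      = p n k := by
    have : (X.filter (fun S => ¬ (2*n+3) ∈ S)).filter (fun S => (2*n+4) ∈ S)
        = X.filter (fun S => (2*n+4) ∈ S) := by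
      rw [Finset.filter_filter]
      apply Finset.filter_congr
      intro S hS
      simp only [iff_self_and, and_iff_right_iff_imp]
      intro h4
      exact hnotboth S hS h4
    rw [this, hX, Finset.filter_filter]
    exact card_contains n k (2*n+4) (by omega) (by omega)
  -- X0
  have hX0 : ((X.filter (fun S => ¬ (2*n+3) ∈ S)).filter (fun S => ¬ (2*n+4) ∈ S)).card
      = p (n+1) (k+1) := by
    rw [p, h22]
    congr 1
    rw [Finset.filter_filter, hX, Finset.filter_filter]
    ext S
    simp only [Finset.mem_filter, Finset.mem_powerset]
    constructor
    · rintro ⟨hsub, hPS, h3, h4⟩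
      refine ⟨?_, hPS⟩
      intro a ha
      have := Finset.mem_Icc.mp (hsub ha)
      have ha3 : a ≠ 2*n+3 := fun h => h3 (h ▸ ha)
      have ha4 : a ≠ 2*n+4 := fun h => h4 (h ▸ ha)
      rw [Finset.mem_Icc]; omega
    · rintro ⟨hsub, hPS⟩
      refine ⟨fun a ha => ?_, hPS, fun h3 => ?_, fun h4 => ?_⟩
      · have := Finset.mem_Icc.mp (hsub ha); rw [Finset.mem_Icc]; omega
      · have := Finset.mem_Icc.mp (hsub h3); omega
      · have := Finset.mem_Icc.mp (hsub h4); omega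
  omega

instance : DecidablePred KLegal := fun S => by unfold KLegal; infer_instance

lemma p_eval (n k : ℕ) :
    p n k = ((Finset.Icc 1 (2 * n)).powerset.filter
      (fun S => KLegal S ∧ S.card = k)).card := by
  unfold p
  congr 1
  exact Finset.filter_congr_decidable _ _ _

lemma p_one_one : p 1 1 = 2 := by rw [p_eval]; decide

lemma p_one_two : p 1 2 = 0 := by rw [p_eval]; decide

noncomputable def Sw (w : ℕ → ℝ) (n : ℕ) : ℝ :=
  ∑ k ∈ Finset.range (2*n+1), w k * (p n k : ℝ)

lemma sw_stab (w : ℕ → ℝ) (n m : ℕ) (h : 2*n+1 ≤ m) :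
    ∑ k ∈ Finset.range m, w k * (p n k : ℝ) = Sw w n := by
  rw [Sw]
  refine (Finset.sum_subset (Finset.range_subset_range.mpr h) ?_).symm
  intro k _ hk
  rw [Finset.mem_range, not_lt] at hk
  rw [p_eq_zero (by omega), Nat.cast_zero, mul_zero]

lemma sw_rec (w : ℕ → ℝ) (n : ℕ) :
    Sw w (n+2) = Sw w (n+1) + 2 * Sw (fun k => w (k+1)) n := by
  have key : Sw w (n+2)
      = (∑ k ∈ Finset.range (2*n+4), w (k+1) * (p (n+2) (k+1) : ℝ))
        + w 0 * (p (n+2) 0 : ℝ) := by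
    rw [Sw, show 2*(n+2)+1 = (2*n+4)+1 from by ring, Finset.sum_range_succ']
  have e1 : ∀ k ∈ Finset.range (2*n+4), w (k+1) * (p (n+2) (k+1) : ℝ)
      = w (k+1) * (p (n+1) (k+1) : ℝ) + 2 * (w (k+1) * (p n k : ℝ)) := by
    intro k _; rw [p_rec]; push_cast; ring
  rw [key, Finset.sum_congr rfl e1, Finset.sum_add_distrib]
  have h2 : (∑ k ∈ Finset.range (2*n+4), w (k+1) * (p (n+1) (k+1) : ℝ))
      + w 0 * (p (n+2) 0 : ℝ) = Sw w (n+1) := by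
    rw [p_zero, show ((1:ℕ):ℝ) = ((p (n+1) 0 : ℕ) : ℝ) from by rw [p_zero]]
    exact (Finset.sum_range_succ' (fun k => w k * (p (n+1) k : ℝ)) (2*n+4)).symm.trans
      (sw_stab w (n+1) (2*n+4+1) (by omega))
  have h3 : (∑ k ∈ Finset.range (2*n+4), 2 * (w (k+1) * (p n k : ℝ)))
      = 2 * Sw (fun k => w (k+1)) n := by
    rw [← Finset.mul_sum, sw_stab (fun k => w (k+1)) n (2*n+4) (by omega)]
  linarith

lemma sw_shift_one (n : ℕ) :
    Sw (fun k => ((1:ℝ))) n = Sw (fun _ => (1:ℝ)) n := rfl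

lemma sw_shift_id (n : ℕ) :
    Sw (fun k => ((k+1 : ℕ) : ℝ)) n = Sw (fun k => (k:ℝ)) n + Sw (fun _ => (1:ℝ)) n := by
  rw [Sw, Sw, Sw, ← Finset.sum_add_distrib]
  refine Finset.sum_congr rfl fun k _ => ?_
  push_cast; ring

lemma sw_shift_sq (n : ℕ) :
    Sw (fun k => ((k+1 : ℕ) : ℝ)^2) n
      = Sw (fun k => (k:ℝ)^2) n + 2 * Sw (fun k => (k:ℝ)) n + Sw (fun _ => (1:ℝ)) n := by
  rw [Sw, Sw, Sw, Finset.mul_sum, Sw, ← Finset.sum_add_distrib, ← Finset.sum_add_distrib]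
  refine Finset.sum_congr rfl fun k _ => ?_
  push_cast; ring

lemma sw_closed (n : ℕ) :
    Sw (fun _ => (1:ℝ)) n = (4 * 2^n - (-1)^n) / 3
    ∧ Sw (fun k => (k:ℝ)) n = ((12*n+8) * 2^n - (6*n+8) * (-1)^n) / 27
    ∧ Sw (fun k => (k:ℝ)^2) n
        = ((12*n^2+24*n+16) * 2^n - (12*n^2+30*n+16) * (-1)^n) / 81 := by
  induction n using Nat.twoStepInduction with
  | zero =>
    have h : ∀ w : ℕ → ℝ, Sw w 0 = w 0 * (p 0 0 : ℝ) := fun w => by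
      rw [Sw]; norm_num
    refine ⟨?_, ?_, ?_⟩ <;> rw [h, p_zero] <;> norm_num
  | one =>
    have h : ∀ w : ℕ → ℝ, Sw w 1 = w 0 * (p 1 0 : ℝ) + w 1 * (p 1 1 : ℝ) + w 2 * (p 1 2 : ℝ) := by
      intro w
      rw [Sw, show 2*1+1 = 3 from rfl, Finset.sum_range_succ, Finset.sum_range_succ,
        Finset.sum_range_one]
    refine ⟨?_, ?_, ?_⟩ <;> rw [h, p_zero, p_one_one, p_one_two] <;> norm_num
  | more n ih1 ih2 =>
    obtain ⟨a0, b0, c0⟩ := ih1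
    obtain ⟨a1, b1, c1⟩ := ih2
    have hA := sw_rec (fun _ => (1:ℝ)) n
    have hB := sw_rec (fun k => (k:ℝ)) n
    have hC := sw_rec (fun k => (k:ℝ)^2) n
    rw [sw_shift_id] at hB
    rw [show (fun k => ((k+1 : ℕ) : ℝ)^2) = (fun k => (((k:ℕ)+1 : ℕ) : ℝ)^2) from rfl] at hC
    rw [sw_shift_sq] at hC
    refine ⟨?_, ?_, ?_⟩
    · rw [hA, a0, a1]; push_cast; ring
    · rw [hB, b1, b0, a0]; push_cast; ring
    · rw [hC, c1, c0, b0, a0]; push_cast; ring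

lemma tsum_w (n : ℕ) (w : ℕ → ℝ) : ∑' k : ℕ, w k * (p n k : ℝ) = Sw w n := by
  rw [Sw]
  apply tsum_eq_sum
  intro k hk
  rw [Finset.mem_range, not_lt] at hk
  rw [p_eq_zero (by omega), Nat.cast_zero, mul_zero]


/-- Exact formula for the variance. -/
theorem kentucky_variance_exact (n : ℕ) (hn : 1 ≤ n) :
    sigmaSq n =
      (2 ^ (2 * n + 5) * (4 + 3 * (n : ℝ)) - 2 * (8 + 3 * (n : ℝ)) -
          2 ^ (n + 2) * (-1) ^ n * (28 + 36 * (n : ℝ) + 9 * (n : ℝ) ^ 2)) /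
        (81 * (2 ^ (n + 2) - (-1) ^ n) ^ 2) := by
  obtain ⟨ha, hb, hc⟩ := sw_closed n
  have h1 : (∑' k : ℕ, (p n k : ℝ)) = (4 * 2^n - (-1)^n) / 3 := by
    rw [← ha, ← tsum_w n (fun _ => 1)]
    exact tsum_congr fun k => (one_mul _).symm
  have h2 : (∑' k : ℕ, (k : ℝ) * (p n k : ℝ))
      = ((12*n+8) * 2^n - (6*n+8) * (-1)^n) / 27 := by
    rw [← hb]; exact tsum_w n _
  have h3 : (∑' k : ℕ, (k : ℝ)^2 * (p n k : ℝ))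
      = ((12*n^2+24*n+16) * 2^n - (12*n^2+30*n+16) * (-1)^n) / 81 := by
    rw [← hc]; exact tsum_w n _
  rw [sigmaSq, mu, h1, h2, h3]
  have hx1 : (1:ℝ) ≤ 2 ^ n := one_le_pow₀ (by norm_num)
  have hp1 : (2:ℝ) ^ (2*n+5) = 32 * ((2:ℝ)^n)^2 := by
    rw [show 2*n+5 = n*2+5 from by ring, pow_add, pow_mul]; norm_num; ring
  have hp2 : (2:ℝ) ^ (n+2) = 4 * 2^n := by rw [pow_add]; norm_num; ring
  rw [hp1, hp2]
  rcases Nat.even_or_odd n with he | ho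
  · rw [he.neg_one_pow]
    have hd : 4 * (2:ℝ)^n - 1 ≠ 0 := by nlinarith
    field_simp
    ring
  · rw [ho.neg_one_pow]
    have hd : 4 * (2:ℝ)^n + 1 ≠ 0 := by nlinarith
    field_simp
    ring
end

section
/- The fraction of gaps of length 3 converges: lim_{n→∞} N_n(3)/T_n = 1/8. -/
open scoped Classical
open Filter

/-- The Kentucky-2 sequence: `a 1 = 1`, `a 2 = 2`, `a 3 = 3`, `a 4 = 4`, and
`a (n+4) = a (n+2) + 2 * a n` for all `n ≥ 1`. -/
def kent : ℕ → ℕ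
  | 0 => 0
  | 1 => 1
  | 2 => 2
  | 3 => 3
  | 4 => 4
  | n + 5 => kent (n + 3) + 2 * kent (n + 1)

/-- `decomp m` is the (unique) Kentucky-2 legal set of indices whose corresponding summands
add up to `m`. -/
noncomputable def decomp (m : ℕ) : Finset ℕ :=
  if h : ∃ S : Finset ℕ, KLegal S ∧ ∑ i ∈ S, kent i = m then h.choose else ∅

/-- `gapsOf S g` is the number of gaps of length `g` in the set `S` of summand indices,
i.e. the number of pairs of consecutive elements of `S` differing by `g`. -/
def gapsOf (S : Finset ℕ) (g : ℕ) : ℕ :=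
  (S.filter fun i => 0 < g ∧ i + g ∈ S ∧ ∀ l ∈ S, l ≤ i ∨ i + g ≤ l).card

/-- `N n g` is the total number (with multiplicity) of gaps of length `g` in the Kentucky-2
legal decompositions of the integers `m ∈ {1, …, a (2n+1) - 1}`. -/
noncomputable def N (n g : ℕ) : ℕ :=
  ∑ m ∈ Finset.Icc 1 (kent (2 * n + 1) - 1), gapsOf (decomp m) g

/-- `T n = Σ_{g≥0} N n g`, the total number of gaps. -/
noncomputable def T (n : ℕ) : ℝ := ∑' g : ℕ, (N n g : ℝ)



lemma kent_rec (n : ℕ) : kent (n+5) = kent (n+3) + 2 * kent (n+1) := rfl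

def J (n : ℕ) : ℕ := kent (2*n+1)

lemma J_rec (n : ℕ) : J (n+2) = J (n+1) + 2 * J n := by
  show kent (2*n+5) = kent (2*n+3) + 2 * kent (2*n+1)
  rw [kent_rec]

lemma J0 : J 0 = 1 := rfl
lemma J1 : J 1 = 3 := rfl

lemma kent_even (n : ℕ) : kent (2*n+2) = 2^(n+1) := by
  induction n using Nat.strong_induction_on with
  | _ n ih =>
    match n with
    | 0 => rfl
    | 1 => rfl
    | (k+2) =>
      have h1 := ih k (by omega)
      have h2 := ih (k+1) (by omega)
      show kent (2*k+1+5) = _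
      rw [kent_rec]
      have : 2*k+1+3 = 2*(k+1)+2 := by ring
      rw [this]
      have : 2*k+1+1 = 2*k+2 := by ring
      rw [this, h1, h2]; ring

lemma J_sum (n : ℕ) : J (n+1) + J n = 2^(n+2) := by
  induction n with
  | zero => rfl
  | succ k ih =>
    rw [J_rec]
    have : J (k+1) + 2 * J k + J (k+1) = 2 * (J (k+1) + J k) := by ring
    rw [this, ih]; ring

lemma J_gap (n : ℕ) : J (n+2) = J n + 2^(n+2) := by
  rw [J_rec, ← J_sum n]; ring

lemma J_pos (n : ℕ) : 1 ≤ J n := by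
  induction n using Nat.strong_induction_on with
  | _ n ih =>
    match n with
    | 0 => exact le_refl 1
    | 1 => norm_num [J1]
    | (k+2) => have := ih k (by omega); rw [J_rec]; omega

lemma J_mono (n : ℕ) : J n ≤ J (n+1) := by
  induction n using Nat.strong_induction_on with
  | _ n ih =>
    match n with
    | 0 => norm_num [J0, J1]
    | (k+1) => have := J_pos k; rw [J_rec]; omega

lemma kent_strictMono : StrictMono kent := by
  have key : ∀ n, kent n < kent (n+1) := by
    intro n
    induction n using Nat.strong_induction_on with
    | _ n ih =>
      match n with
      | 0 => decide
      | 1 => decide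
      | 2 => decide
      | 3 => decide
      | 4 => decide
      | (k+5) =>
        have h1 := ih (k+1) (by omega)
        have h2 := ih (k+3) (by omega)
        rw [kent_rec, show k+5+1 = (k+1)+5 by ring, kent_rec,
          show k+1+3 = k+3+1 by ring]
        omega
  exact strictMono_nat_of_lt_succ key

instance inst_s15 : DecidablePred KLegal := fun S =>
  inferInstanceAs (Decidable ((∀ i ∈ S, 1 ≤ i) ∧
  ∀ i ∈ S, ∀ j ∈ S, i ≠ j → 2 ≤ |(((i + 1) / 2 : ℕ) : ℤ) - (((j + 1) / 2 : ℕ) : ℤ)|))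
def Sn (n : ℕ) : Finset (Finset ℕ) := (Finset.Icc 1 (2*n)).powerset.filter KLegal

lemma abs2 (a b : ℕ) : 2 ≤ |(a:ℤ) - (b:ℤ)| ↔ a + 2 ≤ b ∨ b + 2 ≤ a := by
  rw [le_abs]; omega

lemma mem_Sn {n : ℕ} {S : Finset ℕ} :
    S ∈ Sn n ↔ (∀ i ∈ S, 1 ≤ i ∧ i ≤ 2*n) ∧ KLegal S := by
  unfold Sn
  rw [Finset.mem_filter, Finset.mem_powerset]
  constructor
  · rintro ⟨hsub, hl⟩
    exact ⟨fun i hi => by have := hsub hi; simp [Finset.mem_Icc] at this; omega, hl⟩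
  · rintro ⟨hb, hl⟩
    exact ⟨fun i hi => by simp [Finset.mem_Icc]; exact (hb i hi).imp id id, hl⟩

lemma Sn_subset {n : ℕ} : Sn n ⊆ Sn (n+1) := by
  intro S hS
  rw [mem_Sn] at hS ⊢
  exact ⟨fun i hi => ⟨(hS.1 i hi).1, by have := (hS.1 i hi).2; omega⟩, hS.2⟩

lemma not_mem_of_Sn {n x : ℕ} {S : Finset ℕ} (hS : S ∈ Sn n) (hx : 2*n < x) : x ∉ S := by
  intro h
  have := (mem_Sn.mp hS).1 x h
  omega

lemma insert_mem_Sn {n x : ℕ} {S : Finset ℕ} (hS : S ∈ Sn n)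
    (hx : x = 2*n+3 ∨ x = 2*n+4) : insert x S ∈ Sn (n+2) := by
  have hx' : 2*n + 3 ≤ x ∧ x ≤ 2*n+4 := by omega
  clear hx
  rw [mem_Sn] at hS ⊢
  obtain ⟨hb, hpos, hleg⟩ := hS
  refine ⟨?_, ?_, ?_⟩
  · intro i hi
    rcases Finset.mem_insert.mp hi with rfl | hi
    · omega
    · have := hb i hi; omega
  · intro i hi
    rcases Finset.mem_insert.mp hi with rfl | hi
    · omega
    · exact hpos i hi
  · intro i hi j hj hij
    rcases Finset.mem_insert.mp hi with hi' | hi' <;>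
      rcases Finset.mem_insert.mp hj with hj' | hj'
    · omega
    · have := hb j hj'; rw [abs2]; omega
    · have := hb i hi'; rw [abs2]; omega
    · exact hleg i hi' j hj' hij

lemma erase_mem_Sn {n x : ℕ} {S : Finset ℕ} (hS : S ∈ Sn (n+2))
    (hx : x = 2*n+3 ∨ x = 2*n+4) (hxS : x ∈ S) : S.erase x ∈ Sn n := by
  rw [mem_Sn] at hS ⊢
  obtain ⟨hb, hpos, hleg⟩ := hS
  constructor
  · intro i hi
    have hi' := Finset.mem_of_mem_erase hi
    have hne := Finset.ne_of_mem_erase hi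
    have h2 := hleg i hi' x hxS hne
    rw [abs2] at h2
    have := hb i hi'
    omega
  · exact ⟨fun i hi => hpos i (Finset.mem_of_mem_erase hi),
      fun i hi j hj hij => hleg i (Finset.mem_of_mem_erase hi) j (Finset.mem_of_mem_erase hj) hij⟩

lemma Sn_structure (n : ℕ) :
    Sn (n+2) = (Sn (n+1) ∪ (Sn n).image (insert (2*n+3))) ∪ (Sn n).image (insert (2*n+4)) := by
  ext S
  simp only [Finset.mem_union, Finset.mem_image]
  constructor
  · intro hS
    by_cases h3 : 2*n+3 ∈ S
    · refine Or.inl (Or.inr ⟨S.erase (2*n+3), erase_mem_Sn hS (Or.inl rfl) h3, ?_⟩)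
      exact Finset.insert_erase h3
    by_cases h4 : 2*n+4 ∈ S
    · refine Or.inr ⟨S.erase (2*n+4), erase_mem_Sn hS (Or.inr rfl) h4, ?_⟩
      exact Finset.insert_erase h4
    · left; left
      rw [mem_Sn] at hS ⊢
      refine ⟨fun i hi => ?_, hS.2⟩
      have := hS.1 i hi
      rcases Nat.lt_or_ge i (2*n+3) with h | h
      · omega
      · exfalso
        have : i = 2*n+3 ∨ i = 2*n+4 := by omega
        rcases this with rfl | rfl <;> contradiction
  · rintro ((hS | ⟨S', hS', rfl⟩) | ⟨S', hS', rfl⟩)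
    · exact Sn_subset hS
    · exact insert_mem_Sn hS' (Or.inl rfl)
    · exact insert_mem_Sn hS' (Or.inr rfl)

lemma Sn_sum_step {M : Type*} [AddCommMonoid M] (n : ℕ) (f : Finset ℕ → M) :
    ∑ S ∈ Sn (n+2), f S =
      ∑ S ∈ Sn (n+1), f S + ∑ S ∈ Sn n, f (insert (2*n+3) S)
        + ∑ S ∈ Sn n, f (insert (2*n+4) S) := by
  have hinj : ∀ x, 2*n < x → ∀ A ∈ Sn n, ∀ B ∈ Sn n, insert x A = insert x B → A = B := by
    intro x hx A hA B hB hAB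
    have hA' : x ∉ A := not_mem_of_Sn hA hx
    have hB' : x ∉ B := not_mem_of_Sn hB hx
    rw [← Finset.erase_insert hA', ← Finset.erase_insert hB', hAB]
  have d1 : Disjoint (Sn (n+1)) ((Sn n).image (insert (2*n+3))) := by
    rw [Finset.disjoint_left]
    rintro S hS hS'
    simp only [Finset.mem_image] at hS'
    obtain ⟨S', _, rfl⟩ := hS'
    exact not_mem_of_Sn hS (by omega) (Finset.mem_insert_self _ _)
  have d2 : Disjoint (Sn (n+1) ∪ (Sn n).image (insert (2*n+3)))
      ((Sn n).image (insert (2*n+4))) := by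
    rw [Finset.disjoint_left]
    rintro S hS hS'
    simp only [Finset.mem_image] at hS'
    obtain ⟨S', hS'', rfl⟩ := hS'
    rcases Finset.mem_union.mp hS with h | h
    · exact not_mem_of_Sn h (by omega) (Finset.mem_insert_self _ _)
    · simp only [Finset.mem_image] at h
      obtain ⟨B, hB, hBe⟩ := h
      have : 2*n+3 ∈ insert (2*n+4) S' := by
        rw [← hBe]; exact Finset.mem_insert_self _ _
      rcases Finset.mem_insert.mp this with h' | h'
      · omega
      · exact not_mem_of_Sn hS'' (by omega) h'
  rw [Sn_structure n, Finset.sum_union d2, Finset.sum_union d1,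
    Finset.sum_image (fun A hA B hB => hinj (2*n+4) (by omega) A hA B hB),
    Finset.sum_image (fun A hA B hB => hinj (2*n+3) (by omega) A hA B hB)]

lemma sum_lt_J : ∀ n, ∀ S ∈ Sn n, ∑ i ∈ S, kent i < J n := by
  intro n
  induction n using Nat.strong_induction_on with
  | _ n ih =>
    match n with
    | 0 => decide
    | 1 => decide
    | (k+2) =>
      intro S hS
      by_cases h3 : 2*k+3 ∈ S
      · have he := erase_mem_Sn hS (Or.inl rfl) h3
        have hlt := ih k (by omega) _ he
        have hsplit := Finset.add_sum_erase S kent h3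
        have hk : kent (2*k+3) = J (k+1) := by unfold J; rw [show 2*(k+1)+1 = 2*k+3 by ring]
        rw [J_rec]
        have := J_pos k
        omega
      by_cases h4 : 2*k+4 ∈ S
      · have he := erase_mem_Sn hS (Or.inr rfl) h4
        have hlt := ih k (by omega) _ he
        have hsplit := Finset.add_sum_erase S kent h4
        have hk : kent (2*k+4) = 2^(k+2) := by
          have := kent_even (k+1); rw [show 2*(k+1)+2 = 2*k+4 by ring] at this
          exact this
        rw [J_gap]
        omega
      · have : S ∈ Sn (k+1) := by
          rw [mem_Sn] at hS ⊢
          refine ⟨fun i hi => ?_, hS.2⟩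
          have := hS.1 i hi
          rcases Nat.lt_or_ge i (2*k+3) with h | h
          · omega
          · exfalso
            have : i = 2*k+3 ∨ i = 2*k+4 := by omega
            rcases this with rfl | rfl <;> contradiction
        have h5 := ih (k+1) (by omega) _ this
        have h6 := J_mono (k+1)
        rw [show k+1+1 = k+2 by ring] at h6
        omega

lemma card_Sn : ∀ n, (Sn n).card = J n := by
  intro n
  induction n using Nat.strong_induction_on with
  | _ n ih =>
    match n with
    | 0 => decide
    | 1 => decide
    | (k+2) =>
      have h := Sn_sum_step k (fun _ => (1:ℕ))
      simp only [Finset.sum_const, smul_eq_mul, mul_one] at h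
      rw [h, ih (k+1) (by omega), ih k (by omega), J_rec]
      ring

lemma exists_sum : ∀ n, ∀ m < J n, ∃ S ∈ Sn n, ∑ i ∈ S, kent i = m := by
  intro n
  induction n using Nat.strong_induction_on with
  | _ n ih =>
    match n with
    | 0 =>
      intro m hm
      rw [J0] at hm
      interval_cases m
      exact ⟨∅, by decide, rfl⟩
    | 1 =>
      intro m hm
      rw [J1] at hm
      interval_cases m
      · exact ⟨∅, by decide, rfl⟩
      · exact ⟨{1}, by decide, rfl⟩
      · exact ⟨{2}, by decide, rfl⟩
    | (k+2) =>
      intro m hm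
      rcases Nat.lt_or_ge m (J (k+1)) with h | h
      · obtain ⟨S, hS, hsum⟩ := ih (k+1) (by omega) m h
        exact ⟨S, Sn_subset hS, hsum⟩
      rcases Nat.lt_or_ge m (J (k+1) + J k) with h2 | h2
      · obtain ⟨S, hS, hsum⟩ := ih k (by omega) (m - J (k+1)) (by omega)
        refine ⟨insert (2*k+3) S, insert_mem_Sn hS (Or.inl rfl), ?_⟩
        rw [Finset.sum_insert (not_mem_of_Sn hS (by omega))]
        have hk : kent (2*k+3) = J (k+1) := by unfold J; rw [show 2*(k+1)+1 = 2*k+3 by ring]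
        omega
      · have hmlt : m - 2^(k+2) < J k := by
          rw [J_rec] at hm
          have := J_sum k
          omega
        obtain ⟨S, hS, hsum⟩ := ih k (by omega) (m - 2^(k+2)) hmlt
        refine ⟨insert (2*k+4) S, insert_mem_Sn hS (Or.inr rfl), ?_⟩
        rw [Finset.sum_insert (not_mem_of_Sn hS (by omega))]
        have hk : kent (2*k+4) = 2^(k+2) := by
          have := kent_even (k+1); rw [show 2*(k+1)+2 = 2*k+4 by ring] at this
          exact this
        have h2' : 2^(k+2) ≤ m := by
          have := J_sum k
          omega
        omega

lemma sum_injOn (n : ℕ) : ∀ S1 ∈ Sn n, ∀ S2 ∈ Sn n,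
    (∑ i ∈ S1, kent i) = (∑ i ∈ S2, kent i) → S1 = S2 := by
  have him : (Sn n).image (fun S => ∑ i ∈ S, kent i) = Finset.range (J n) := by
    apply Finset.Subset.antisymm
    · intro m hm
      simp only [Finset.mem_image] at hm
      obtain ⟨S, hS, rfl⟩ := hm
      exact Finset.mem_range.mpr (sum_lt_J n S hS)
    · intro m hm
      obtain ⟨S, hS, hsum⟩ := exists_sum n m (Finset.mem_range.mp hm)
      exact Finset.mem_image.mpr ⟨S, hS, hsum⟩
  have hcard : ((Sn n).image (fun S => ∑ i ∈ S, kent i)).card = (Sn n).card := by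
    rw [him, Finset.card_range, card_Sn]
  have := (Finset.card_image_iff).mp hcard
  intro S1 h1 S2 h2 he
  exact this h1 h2 he

lemma kent_pos {i : ℕ} (hi : 1 ≤ i) : 1 ≤ kent i := by
  have := kent_strictMono (show 0 < i from hi)
  exact this

lemma legal_mem_Sn {n : ℕ} {S : Finset ℕ} (hS : KLegal S)
    (hsum : ∑ i ∈ S, kent i < J n) : S ∈ Sn n := by
  rw [mem_Sn]
  refine ⟨fun i hi => ⟨hS.1 i hi, ?_⟩, hS⟩
  have hle : kent i ≤ ∑ j ∈ S, kent j := Finset.single_le_sum (fun j _ => Nat.zero_le _) hi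
  have : kent i < kent (2*n+1) := lt_of_le_of_lt hle hsum
  have := kent_strictMono.lt_iff_lt.mp this
  omega

lemma decomp_spec {n m : ℕ} (hm : m < J n) :
    decomp m ∈ Sn n ∧ ∑ i ∈ decomp m, kent i = m := by
  obtain ⟨S, hS, hsum⟩ := exists_sum n m hm
  have hex : ∃ S : Finset ℕ, KLegal S ∧ ∑ i ∈ S, kent i = m :=
    ⟨S, (mem_Sn.mp hS).2, hsum⟩
  rw [decomp, dif_pos hex]
  obtain ⟨hleg, hs⟩ := hex.choose_spec
  exact ⟨legal_mem_Sn hleg (lt_of_eq_of_lt hs hm), hs⟩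

lemma decomp_sum {n : ℕ} {S : Finset ℕ} (hS : S ∈ Sn n) :
    decomp (∑ i ∈ S, kent i) = S := by
  have hlt := sum_lt_J n S hS
  obtain ⟨h1, h2⟩ := decomp_spec hlt
  exact sum_injOn n _ h1 _ hS h2

lemma sum_transfer {M : Type*} [AddCommMonoid M] (n : ℕ) (f : Finset ℕ → M) :
    ∑ m ∈ Finset.range (J n), f (decomp m) = ∑ S ∈ Sn n, f S := by
  refine Finset.sum_nbij' (fun m => decomp m) (fun S => ∑ i ∈ S, kent i) ?_ ?_ ?_ ?_ ?_
  · intro m hm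
    exact (decomp_spec (Finset.mem_range.mp hm)).1
  · intro S hS
    exact Finset.mem_range.mpr (sum_lt_J n S hS)
  · intro m hm
    exact (decomp_spec (Finset.mem_range.mp hm)).2
  · intro S hS
    exact decomp_sum hS
  · intro m hm
    rfl

lemma sum_transfer' {M : Type*} [AddCommMonoid M] (n : ℕ) (f : Finset ℕ → M)
    (hf : f ∅ = 0) :
    ∑ m ∈ Finset.Icc 1 (kent (2*n+1) - 1), f (decomp m) = ∑ S ∈ Sn n, f S := by
  have hJ : kent (2*n+1) = J n := rfl
  have hpos := J_pos n
  have hrange : Finset.range (J n) = insert 0 (Finset.Icc 1 (J n - 1)) := by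
    ext m
    simp only [Finset.mem_range, Finset.mem_insert, Finset.mem_Icc]
    omega
  have h0 : decomp 0 = ∅ := by
    have : (0:ℕ) < J 0 := by rw [J0]; omega
    obtain ⟨h1, h2⟩ := decomp_spec this
    by_contra hne
    obtain ⟨x, hx⟩ := Finset.nonempty_iff_ne_empty.mpr hne
    have hx1 : 1 ≤ x := ((mem_Sn.mp h1).1 x hx).1
    have : 1 ≤ ∑ i ∈ decomp 0, kent i :=
      le_trans (kent_pos hx1) (Finset.single_le_sum (fun j _ => Nat.zero_le _) hx)
    omega
  rw [← sum_transfer n f, hrange, Finset.sum_insert (by simp), h0, hf, zero_add, hJ]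

lemma gapsOf_empty (g : ℕ) : gapsOf ∅ g = 0 := by
  simp [gapsOf]

lemma gapsOf_insert {S : Finset ℕ} {x g : ℕ} (hx : ∀ y ∈ S, y < x) :
    gapsOf (insert x S) g
      = gapsOf S g + (if (∃ m ∈ S, x = m + g ∧ ∀ l ∈ S, l ≤ m) then 1 else 0) := by
  have hxS : x ∉ S := fun h => lt_irrefl x (hx x h)
  unfold gapsOf
  set T := insert x S with hT
  have hPx : ¬ (0 < g ∧ x + g ∈ T ∧ ∀ l ∈ T, l ≤ x ∨ x + g ≤ l) := by
    rintro ⟨hg, hmem, -⟩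
    rcases Finset.mem_insert.mp hmem with h | h
    · omega
    · have := hx _ h; omega
  rw [hT, Finset.filter_insert, if_neg hPx]
  have hsplit : (S.filter fun i => 0 < g ∧ i + g ∈ T ∧ ∀ l ∈ T, l ≤ i ∨ i + g ≤ l)
      = (S.filter fun i => 0 < g ∧ i + g ∈ S ∧ ∀ l ∈ S, l ≤ i ∨ i + g ≤ l)
        ∪ (S.filter fun i => x = i + g ∧ ∀ l ∈ S, l ≤ i) := by
    ext i
    simp only [Finset.mem_filter, Finset.mem_union]
    constructor
    · rintro ⟨hiS, hg, hmem, hcond⟩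
      rcases Finset.mem_insert.mp hmem with h | h
      · right
        refine ⟨hiS, h.symm, fun l hl => ?_⟩
        rcases hcond l (Finset.mem_insert_of_mem hl) with h' | h'
        · exact h'
        · have := hx l hl; omega
      · left
        exact ⟨hiS, hg, h, fun l hl => hcond l (Finset.mem_insert_of_mem hl)⟩
    · rintro (⟨hiS, hg, hmem, hcond⟩ | ⟨hiS, heq, hcond⟩)
      · refine ⟨hiS, hg, Finset.mem_insert_of_mem hmem, fun l hl => ?_⟩
        rcases Finset.mem_insert.mp hl with rfl | hl
        · right; have := hx _ hmem; omega
        · exact hcond l hl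
      · have hg : 0 < g := by have := hx i hiS; omega
        refine ⟨hiS, hg, by rw [← heq]; exact Finset.mem_insert_self _ _, fun l hl => ?_⟩
        rcases Finset.mem_insert.mp hl with rfl | hl
        · right; omega
        · left; exact hcond l hl
  have hdisj : Disjoint (S.filter fun i => 0 < g ∧ i + g ∈ S ∧ ∀ l ∈ S, l ≤ i ∨ i + g ≤ l)
      (S.filter fun i => x = i + g ∧ ∀ l ∈ S, l ≤ i) := by
    rw [Finset.disjoint_left]
    rintro i hi1 hi2
    rw [Finset.mem_filter] at hi1 hi2
    obtain ⟨-, -, hmem, -⟩ := hi1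
    obtain ⟨-, heq, -⟩ := hi2
    rw [← heq] at hmem
    exact hxS hmem
  rw [hsplit, Finset.card_union_of_disjoint hdisj]
  congr 1
  by_cases h : ∃ m ∈ S, x = m + g ∧ ∀ l ∈ S, l ≤ m
  · rw [if_pos h]
    obtain ⟨m, hm, heq, hmax⟩ := h
    have : (S.filter fun i => x = i + g ∧ ∀ l ∈ S, l ≤ i) = {m} := by
      ext i
      simp only [Finset.mem_filter, Finset.mem_singleton]
      constructor
      · rintro ⟨hiS, heq', -⟩; omega
      · rintro rfl; exact ⟨hm, heq, hmax⟩
    rw [this, Finset.card_singleton]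
  · rw [if_neg h, Finset.card_eq_zero, Finset.filter_eq_empty_iff]
    rintro i hi ⟨heq, hmax⟩
    exact h ⟨i, hi, heq, hmax⟩

lemma gapsOf_zero_of_big {S : Finset ℕ} {n g : ℕ} (hS : ∀ i ∈ S, 1 ≤ i ∧ i ≤ 2*n)
    (hg : 2*n < g) : gapsOf S g = 0 := by
  rw [gapsOf, Finset.card_eq_zero, Finset.filter_eq_empty_iff]
  rintro i hi ⟨hgpos, hmem, -⟩
  have h1 := hS i hi
  have h2 := hS _ hmem
  omega

lemma gaps_total {n : ℕ} : ∀ S : Finset ℕ, (∀ i ∈ S, 1 ≤ i ∧ i ≤ 2*n) →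
    (∑ g ∈ Finset.range (2*n+1), gapsOf S g) + 1 = S.card + (if S = ∅ then 1 else 0) := by
  intro S
  induction S using Finset.strongInduction with
  | _ S ih =>
    intro hS
    rcases eq_or_ne S ∅ with rfl | hne
    · simp [gapsOf_empty]
    · have hSne : S.Nonempty := Finset.nonempty_iff_ne_empty.mpr hne
      set x := S.max' hSne with hxdef
      have hxS : x ∈ S := S.max'_mem hSne
      set S' := S.erase x with hS'def
      have hxS' : x ∉ S' := Finset.notMem_erase _ _
      have hlt : ∀ y ∈ S', y < x := by
        intro y hy
        have := S.le_max' y (Finset.mem_of_mem_erase hy)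
        have hne' := Finset.ne_of_mem_erase hy
        omega
      have hins : S = insert x S' := (Finset.insert_erase hxS).symm
      have hS'sub : ∀ i ∈ S', 1 ≤ i ∧ i ≤ 2*n := fun i hi => hS i (Finset.mem_of_mem_erase hi)
      have hcard : S.card = S'.card + 1 := by
        rw [hins, Finset.card_insert_of_notMem hxS']
      have hsum : ∀ g, gapsOf S g = gapsOf S' g
          + (if (∃ m ∈ S', x = m + g ∧ ∀ l ∈ S', l ≤ m) then 1 else 0) := by
        intro g
        rw [hins]
        exact gapsOf_insert hlt
      rcases eq_or_ne S' ∅ with h' | hne'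
      · have : ∀ g, gapsOf S g = 0 := by
          intro g
          rw [hsum g, h']
          simp [gapsOf_empty]
        rw [Finset.sum_congr rfl (fun g _ => this g), Finset.sum_const_zero,
          if_neg hne, hcard, h']
        simp
      · have hS'ne : S'.Nonempty := Finset.nonempty_iff_ne_empty.mpr hne'
        set m0 := S'.max' hS'ne with hm0def
        have hm0S' : m0 ∈ S' := S'.max'_mem hS'ne
        have hm0lt : m0 < x := hlt m0 hm0S'
        have hcondiff : ∀ g, (∃ m ∈ S', x = m + g ∧ ∀ l ∈ S', l ≤ m) ↔ g = x - m0 := by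
          intro g
          constructor
          · rintro ⟨m, hm, heq, hmax⟩
            have h1 := S'.le_max' m hm
            have h2 := hmax m0 hm0S'
            omega
          · rintro rfl
            exact ⟨m0, hm0S', by omega, fun l hl => S'.le_max' l hl⟩
        have hib := ih S' (by rw [hins]; exact Finset.ssubset_insert hxS') hS'sub
        rw [if_neg hne'] at hib
        have hrange : x - m0 ∈ Finset.range (2*n+1) := by
          have := hS x hxS
          rw [Finset.mem_range]; omega
        calc (∑ g ∈ Finset.range (2*n+1), gapsOf S g) + 1
            = ((∑ g ∈ Finset.range (2*n+1), gapsOf S' g)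
              + ∑ g ∈ Finset.range (2*n+1), if g = x - m0 then 1 else 0) + 1 := by
              rw [← Finset.sum_add_distrib]
              congr 1
              refine Finset.sum_congr rfl fun g _ => ?_
              rw [hsum g]
              congr 1
              simp only [hcondiff g]
          _ = S'.card + 1 := by
              rw [Finset.sum_ite_eq' (Finset.range (2*n+1)) (x - m0) (fun _ => 1),
                if_pos hrange]
              omega
          _ = S.card + (if S = ∅ then 1 else 0) := by
              rw [if_neg hne, hcard]


def A (n : ℕ) : ℕ := ∑ S ∈ Sn n, gapsOf S 3
def D (n : ℕ) : ℕ := ∑ S ∈ Sn n, (if 2*n ∈ S then 1 else 0)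
def E (n : ℕ) : ℕ := ∑ S ∈ Sn n, S.card
def G (n : ℕ) : ℕ := ∑ S ∈ Sn n, ∑ g ∈ Finset.range (2*n+1), gapsOf S g

lemma Sn_lt {n x : ℕ} {S : Finset ℕ} (hS : S ∈ Sn n) (hx : 2*n < x) : ∀ y ∈ S, y < x :=
  fun y hy => by have := (mem_Sn.mp hS).1 y hy; omega

lemma A_rec (n : ℕ) : A (n+2) = A (n+1) + 2 * A n + D n := by
  have h := Sn_sum_step n (fun S => gapsOf S 3)
  have h3 : ∀ S ∈ Sn n, gapsOf (insert (2*n+3) S) 3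
      = gapsOf S 3 + (if 2*n ∈ S then 1 else 0) := by
    intro S hS
    rw [gapsOf_insert (Sn_lt hS (by omega))]
    congr 1
    by_cases hmem : 2*n ∈ S
    · rw [if_pos hmem, if_pos]
      exact ⟨2*n, hmem, by omega, fun l hl => by have := (mem_Sn.mp hS).1 l hl; omega⟩
    · rw [if_neg hmem, if_neg]
      rintro ⟨m, hm, heq, -⟩
      have : m = 2*n := by omega
      exact hmem (this ▸ hm)
  have h4 : ∀ S ∈ Sn n, gapsOf (insert (2*n+4) S) 3 = gapsOf S 3 := by
    intro S hS
    rw [gapsOf_insert (Sn_lt hS (by omega)), if_neg, add_zero]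
    rintro ⟨m, hm, heq, -⟩
    have hb := (mem_Sn.mp hS).1 m hm
    omega
  unfold A D
  rw [h, Finset.sum_congr rfl h3, Finset.sum_congr rfl h4, Finset.sum_add_distrib]
  ring

lemma D_rec (n : ℕ) : D (n+2) = J n := by
  have h := Sn_sum_step n (fun S => if 2*(n+2) ∈ S then (1:ℕ) else 0)
  unfold D
  rw [h]
  have h1 : ∀ S ∈ Sn (n+1), (if 2*(n+2) ∈ S then (1:ℕ) else 0) = 0 := by
    intro S hS
    rw [if_neg (not_mem_of_Sn hS (by omega))]
  have h2 : ∀ S ∈ Sn n, (if 2*(n+2) ∈ insert (2*n+3) S then (1:ℕ) else 0) = 0 := by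
    intro S hS
    rw [if_neg]
    intro h
    rcases Finset.mem_insert.mp h with h | h
    · omega
    · exact not_mem_of_Sn hS (by omega) h
  have h3 : ∀ S ∈ Sn n, (if 2*(n+2) ∈ insert (2*n+4) S then (1:ℕ) else 0) = 1 := by
    intro S hS
    rw [if_pos]
    exact Finset.mem_insert.mpr (Or.inl (by omega))
  rw [Finset.sum_congr rfl h1, Finset.sum_congr rfl h2, Finset.sum_congr rfl h3,
    Finset.sum_const_zero, Finset.sum_const_zero, Finset.sum_const, smul_eq_mul, mul_one,
    card_Sn]
  omega

lemma E_rec (n : ℕ) : E (n+2) = E (n+1) + 2 * E n + 2 * J n := by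
  have h := Sn_sum_step n (fun S => S.card)
  have hc : ∀ x, 2*n < x → ∀ S ∈ Sn n, (insert x S).card = S.card + 1 := by
    intro x hx S hS
    rw [Finset.card_insert_of_notMem (not_mem_of_Sn hS hx)]
  unfold E
  rw [h, Finset.sum_congr rfl (hc (2*n+3) (by omega)), Finset.sum_congr rfl (hc (2*n+4) (by omega))]
  simp only [Finset.sum_add_distrib, Finset.sum_const, smul_eq_mul, mul_one, card_Sn]
  ring

lemma empty_mem_Sn (n : ℕ) : ∅ ∈ Sn n := by
  rw [mem_Sn]
  exact ⟨fun i hi => absurd hi (Finset.notMem_empty i),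
    ⟨fun i hi => absurd hi (Finset.notMem_empty i),
     fun i hi => absurd hi (Finset.notMem_empty i)⟩⟩

lemma G_eq (n : ℕ) : G n + J n = E n + 1 := by
  have h : ∀ S ∈ Sn n, (∑ g ∈ Finset.range (2*n+1), gapsOf S g) + 1
      = S.card + (if S = ∅ then 1 else 0) := by
    intro S hS
    exact gaps_total S (mem_Sn.mp hS).1
  have h2 : ∑ S ∈ Sn n, ((∑ g ∈ Finset.range (2*n+1), gapsOf S g) + 1)
      = ∑ S ∈ Sn n, (S.card + (if S = ∅ then 1 else 0)) := Finset.sum_congr rfl h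
  rw [Finset.sum_add_distrib, Finset.sum_add_distrib, Finset.sum_const, smul_eq_mul, mul_one,
    Finset.sum_ite_eq' (Sn n) ∅ (fun _ => 1), if_pos (empty_mem_Sn n), card_Sn] at h2
  unfold G E
  omega

lemma N_eq (n g : ℕ) : N n g = ∑ S ∈ Sn n, gapsOf S g :=
  sum_transfer' n (fun S => gapsOf S g) (gapsOf_empty g)

lemma N_zero_of_big {n g : ℕ} (hg : 2*n < g) : N n g = 0 := by
  rw [N_eq]
  exact Finset.sum_eq_zero fun S hS => gapsOf_zero_of_big (mem_Sn.mp hS).1 hg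

lemma T_eq (n : ℕ) : T n = (G n : ℝ) := by
  have h0 : ∀ g ∉ Finset.range (2*n+1), ((N n g : ℝ)) = 0 := by
    intro g hg
    rw [Finset.mem_range] at hg
    rw [N_zero_of_big (by omega)]
    norm_num
  unfold T
  rw [tsum_eq_sum h0,
    Finset.sum_congr rfl (fun g (_ : g ∈ Finset.range (2*n+1)) => by rw [N_eq] :
      ∀ g ∈ Finset.range (2*n+1), ((N n g : ℕ) : ℝ) = ((∑ S ∈ Sn n, gapsOf S g : ℕ) : ℝ))]
  unfold G
  push_cast
  rw [Finset.sum_comm]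

lemma A0 : A 0 = 0 := by decide
lemma A1 : A 1 = 0 := by decide
lemma D0 : D 0 = 0 := by decide
lemma D1 : D 1 = 1 := by decide
lemma E0 : E 0 = 0 := by decide
lemma E1 : E 1 = 2 := by decide

lemma JR : ∀ n : ℕ, 3 * (J n : ℝ) = 2^(n+2) + (-1)^(n+1) := by
  intro n
  induction n using Nat.strong_induction_on with
  | _ n ih =>
    match n with
    | 0 => norm_num [J0]
    | 1 => norm_num [J1]
    | (k+2) =>
      have h1 := ih k (by omega)
      have h2 := ih (k+1) (by omega)
      have h3 : (J (k+2) : ℝ) = J (k+1) + 2 * J k := by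
        rw [J_rec]; push_cast; ring
      rw [h3]
      linear_combination h2 + 2 * h1

lemma DR : ∀ n : ℕ, 3 * (D n : ℝ) = 2^n - (-1)^n := by
  intro n
  match n with
  | 0 => norm_num [D0]
  | 1 => norm_num [D1]
  | (k+2) =>
    rw [D_rec]
    have := JR k
    linear_combination this

lemma AR : ∀ n : ℕ, 54 * (A n : ℝ) = (3*n-4)*2^n + (-1)^n*(4-6*n) := by
  intro n
  induction n using Nat.strong_induction_on with
  | _ n ih =>
    match n with
    | 0 => norm_num [A0]
    | 1 => norm_num [A1]
    | (k+2) =>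
      have h1 := ih k (by omega)
      have h2 := ih (k+1) (by omega)
      have h3 : (A (k+2) : ℝ) = A (k+1) + 2 * A k + D k := by
        rw [A_rec]; push_cast; ring
      have h4 := DR k
      rw [h3]
      push_cast
      push_cast at h1 h2
      linear_combination h2 + 2 * h1 + 18 * h4

lemma ER : ∀ n : ℕ, 27 * (E n : ℝ) = (12*n+8)*2^n - (-1)^n*(6*n+8) := by
  intro n
  induction n using Nat.strong_induction_on with
  | _ n ih =>
    match n with
    | 0 => norm_num [E0]
    | 1 => norm_num [E1]
    | (k+2) =>
      have h1 := ih k (by omega)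
      have h2 := ih (k+1) (by omega)
      have h3 : (E (k+2) : ℝ) = E (k+1) + 2 * E k + 2 * J k := by
        rw [E_rec]; push_cast; ring
      have h4 := JR k
      rw [h3]
      push_cast
      push_cast at h1 h2
      linear_combination h2 + 2 * h1 + 18 * h4

lemma TR (n : ℕ) : 27 * T n = (12*n-28)*2^n - (-1)^n*(6*n-1) + 27 := by
  have hG : (G n : ℝ) + J n = E n + 1 := by
    have h := G_eq n
    have h2 : ((G n + J n : ℕ) : ℝ) = ((E n + 1 : ℕ) : ℝ) := by rw [h]
    push_cast at h2
    linarith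
  have hE := ER n
  have hJ := JR n
  rw [T_eq]
  linear_combination 27 * hG + hE - 9 * hJ


noncomputable def Pf : ℕ → ℝ := fun n => 3 - 4/(n:ℝ) + ((-1)^n*(4-6*(n:ℝ)))/((n:ℝ)*2^n)
noncomputable def Qf : ℕ → ℝ := fun n => 24 - 56/(n:ℝ) + (2*(27-(-1)^n*(6*(n:ℝ)-1)))/((n:ℝ)*2^n)

lemma div_div_aux (x y c : ℝ) (hc : c ≠ 0) : (x/c)/(y/c) = x/y := by
  rw [div_eq_mul_inv (x/c), inv_div, div_mul_div_comm, mul_comm x c, mul_div_mul_left _ _ hc]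

lemma ratio_eq {n : ℕ} (hn : 1 ≤ n) : (N n 3 : ℝ) / T n = Pf n / Qf n := by
  have hNA : N n 3 = A n := N_eq n 3
  have hn' : ((n:ℝ)) ≠ 0 := by positivity
  have h2n : ((2:ℝ)^n) ≠ 0 := by positivity
  have hc : ((n:ℝ) * 2^n) ≠ 0 := mul_ne_zero hn' h2n
  have hP : Pf n = (54 * (A n:ℝ)) / ((n:ℝ)*2^n) := by
    rw [AR n]
    show 3 - 4/(n:ℝ) + ((-1)^n*(4-6*(n:ℝ)))/((n:ℝ)*2^n) = _
    field_simp
  have hQ : Qf n = (54 * T n) / ((n:ℝ)*2^n) := by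
    have h54 : 54 * T n = 2 * (27 * T n) := by ring
    rw [h54, TR n]
    show 24 - 56/(n:ℝ) + (2*(27-(-1)^n*(6*(n:ℝ)-1)))/((n:ℝ)*2^n) = _
    field_simp
    ring
  calc (N n 3:ℝ)/T n = (A n : ℝ)/T n := by rw [hNA]
    _ = (54*(A n:ℝ))/(54 * T n) := (mul_div_mul_left _ _ (by norm_num : (54:ℝ) ≠ 0)).symm
    _ = ((54*(A n:ℝ))/((n:ℝ)*2^n))/((54*T n)/((n:ℝ)*2^n)) := (div_div_aux _ _ _ hc).symm
    _ = Pf n / Qf n := by rw [hP, hQ]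

lemma lim_geo (K : ℝ) : Tendsto (fun n:ℕ => K/2^n) atTop (nhds 0) := by
  have h := tendsto_pow_atTop_nhds_zero_of_lt_one (by norm_num : (0:ℝ) ≤ 1/2) (by norm_num)
  have h2 := h.const_mul K
  rw [mul_zero] at h2
  refine h2.congr fun n => ?_
  rw [div_pow, one_pow, mul_one_div]

lemma wlim : Tendsto (fun n:ℕ => ((-1:ℝ)^n*(4-6*(n:ℝ)))/((n:ℝ)*2^n)) atTop (nhds 0) := by
  refine squeeze_zero_norm (fun n => ?_) (lim_geo 10)
  rcases Nat.eq_zero_or_pos n with rfl | hn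
  · simp
  · have h2 : (0:ℝ) < 2^n := by positivity
    have hnp : (0:ℝ) < n := by exact_mod_cast hn
    have hnp1 : (1:ℝ) ≤ n := by exact_mod_cast hn
    rw [Real.norm_eq_abs, abs_div, abs_mul, abs_pow, abs_neg, abs_one, one_pow, one_mul,
      abs_of_pos (mul_pos hnp h2), div_le_div_iff₀ (mul_pos hnp h2) h2]
    have hb : |4-6*(n:ℝ)| ≤ 10*n := by
      rw [abs_le]; constructor <;> nlinarith
    nlinarith [h2.le]

lemma zlim : Tendsto (fun n:ℕ => (2*(27-(-1:ℝ)^n*(6*(n:ℝ)-1)))/((n:ℝ)*2^n)) atTop (nhds 0) := by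
  refine squeeze_zero_norm (fun n => ?_) (lim_geo 70)
  rcases Nat.eq_zero_or_pos n with rfl | hn
  · simp
  · have h2 : (0:ℝ) < 2^n := by positivity
    have hnp : (0:ℝ) < n := by exact_mod_cast hn
    have hnp1 : (1:ℝ) ≤ n := by exact_mod_cast hn
    rw [Real.norm_eq_abs, abs_div, abs_of_pos (mul_pos hnp h2), div_le_div_iff₀ (mul_pos hnp h2) h2]
    have hb : |2*(27-(-1:ℝ)^n*(6*(n:ℝ)-1))| ≤ 70*n := by
      have habs : |(-1:ℝ)^n*(6*(n:ℝ)-1)| ≤ 6*n+1 := by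
        rw [abs_mul, abs_pow, abs_neg, abs_one, one_pow, one_mul, abs_le]
        constructor <;> nlinarith
      rw [abs_le] at habs ⊢
      constructor <;> nlinarith
    nlinarith [h2.le]

lemma Pf_lim : Tendsto Pf atTop (nhds 3) := by
  have h1 : Tendsto (fun n:ℕ => (4:ℝ)/(n:ℝ)) atTop (nhds 0) :=
    tendsto_const_div_atTop_nhds_zero_nat 4
  have h : Tendsto (fun n:ℕ => 3 - 4/(n:ℝ) + ((-1)^n*(4-6*(n:ℝ)))/((n:ℝ)*2^n))
      atTop (nhds (3 - 0 + 0)) := (tendsto_const_nhds.sub h1).add wlim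
  norm_num at h
  exact h

lemma Qf_lim : Tendsto Qf atTop (nhds 24) := by
  have h1 : Tendsto (fun n:ℕ => (56:ℝ)/(n:ℝ)) atTop (nhds 0) :=
    tendsto_const_div_atTop_nhds_zero_nat 56
  have h : Tendsto (fun n:ℕ => 24 - 56/(n:ℝ) + (2*(27-(-1)^n*(6*(n:ℝ)-1)))/((n:ℝ)*2^n))
      atTop (nhds (24 - 0 + 0)) := (tendsto_const_nhds.sub h1).add zlim
  norm_num at h
  exact h


/-- The fraction of gaps of length `3` converges to `1/8`. -/
theorem kentucky_gaps_three :
    Tendsto (fun n : ℕ => (N n 3 : ℝ) / T n) atTop (nhds (1 / 8)) := by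
  have h := Pf_lim.div Qf_lim (by norm_num : (24:ℝ) ≠ 0)
  have he : (3/24 : ℝ) = 1/8 := by norm_num
  rw [he] at h
  refine Tendsto.congr' ?_ h
  filter_upwards [eventually_ge_atTop 1] with n hn
  exact (ratio_eq hn).symm
end
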